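/- Define for n ∈ ℕ the Laurent polynomial a_n(q) := (−1)^n q^{n(n+3)/2 − 1} Σ_{k=1}^{n+1} q^{k²} [n+k choose 2k−1]_q (the n-th Habiro cyclotomic coefficient of the mirror of the (2,5)-torus knot). Let p ≥ 3 be an odd integer, let e_p be a primitive p-th root of unity in ℂ, and let m ≥ 1 be an integer. Then a_{mp}(e_p) = (−1)^m ( 1 + Σ_{ℓ=0}^{m−1} C(m+ℓ, 2ℓ) + e_p^{−1} · ( Σ_{ℓ=0}^{m−1} C(m+ℓ, 2ℓ+1) ) · Σ_{j=(p+1)/2}^{p−1} e_p^{j²} [j choose 2j−1−p]_{e_p} ), where C(·,·) is the ordinary binomial coefficient. -/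

import Mathlib

/-!
At a primitive `p`-th root of unity `e` the `q`-Lucas theorem
`[a p + b, c p + d]_e = C(a, c) [b, d]_e` (for `b, d < p`) splits every Gaussian binomial in
`a_{mp}(e)`. Writing `k = l p + r` with `1 ≤ r ≤ p`, the summand `e^{k²} [mp + k, 2k - 1]_e`
becomes `e^{r²} C(m + l, 2l) [r, 2r - 1]_e` when `2r - 1 < p`, which vanishes unless `r = 1`,
and `e^{r²} C(m + l, 2l + 1) [r, 2r - 1 - p]_e` when `2r - 1 ≥ p`, which vanishes for `r = p`.
The last summand `k = mp + 1` contributes `e`. Since `p` is odd, `(-1)^{mp} = (-1)^m` and `p`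
divides `mp(mp + 3)/2`, so the prefactor is `(-1)^m e⁻¹`.
-/

/-- Evaluation at `ζ : ℂ` of the Gaussian binomial coefficient `[n choose k]_q ∈ ℤ[q]`,
defined by the `q`-Pascal recursion, agreeing with
`∏_{i=1}^{k} (1−q^{n−k+i})/(1−q^i)` for `k ≤ n` and with `0` for `k > n`. -/
def qbinom : ℕ → ℕ → ℂ → ℂ
  | _, 0, _ => 1
  | 0, _ + 1, _ => 0
  | n + 1, k + 1, ζ => qbinom n k ζ + ζ ^ (k + 1) * qbinom n (k + 1) ζ

/-- The `n`-th Habiro cyclotomic coefficient of the mirror of the `(2,5)`-torus knot,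
`a_n(q) = (−1)^n q^{n(n+3)/2 − 1} Σ_{k=1}^{n+1} q^{k²} [n+k choose 2k−1]_q`,
evaluated at `ζ ≠ 0`. -/
noncomputable def aCoef (n : ℕ) (ζ : ℂ) : ℂ :=
  (-1) ^ n * ζ ^ (((n * (n + 3) / 2 : ℕ) : ℤ) - 1) *
    ∑ k ∈ Finset.Icc 1 (n + 1), ζ ^ (k ^ 2) * qbinom (n + k) (2 * k - 1) ζ

@[simp]
lemma qbinom_zero_right (n : ℕ) (ζ : ℂ) : qbinom n 0 ζ = 1 := by
  cases n <;> rfl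

lemma qbinom_succ_succ (n k : ℕ) (ζ : ℂ) :
    qbinom (n + 1) (k + 1) ζ = qbinom n k ζ + ζ ^ (k + 1) * qbinom n (k + 1) ζ := rfl

lemma qbinom_eq_zero_of_lt {n k : ℕ} (h : n < k) (ζ : ℂ) : qbinom n k ζ = 0 := by
  induction n generalizing k with
  | zero => obtain ⟨k, rfl⟩ := Nat.exists_eq_add_of_lt h; rfl
  | succ n ih =>
    obtain ⟨k, rfl⟩ : ∃ j, k = j + 1 := ⟨k - 1, by omega⟩
    rw [qbinom_succ_succ, ih (by omega), ih (by omega), mul_zero, add_zero]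

@[simp]
lemma qbinom_self (n : ℕ) (ζ : ℂ) : qbinom n n ζ = 1 := by
  induction n with
  | zero => rfl
  | succ n ih => rw [qbinom_succ_succ, ih, qbinom_eq_zero_of_lt n.lt_succ_self, mul_zero, add_zero]

lemma one_sub_pow_mul_qbinom (n k : ℕ) (ζ : ℂ) :
    (1 - ζ ^ (n - k)) * qbinom n k ζ = (1 - ζ ^ (k + 1)) * qbinom n (k + 1) ζ := by
  induction n generalizing k with
  | zero => cases k <;> simp [qbinom_eq_zero_of_lt]
  | succ n ih =>
    rcases le_or_gt (n + 1) k with hk | hk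
    · rw [Nat.sub_eq_zero_of_le hk, qbinom_eq_zero_of_lt (Nat.lt_succ_of_le hk)]
      simp
    cases k with
    | zero =>
      have h₀ := ih 0
      simp only [Nat.sub_zero, zero_add, qbinom_zero_right, mul_one] at h₀ ⊢
      rw [qbinom_succ_succ, qbinom_zero_right]
      linear_combination ζ * h₀
    | succ k =>
      obtain ⟨j, hj⟩ : ∃ j, n - k = j + 1 := ⟨n - k - 1, by omega⟩
      have h₁ := ih k
      have h₂ := ih (k + 1)
      rw [hj] at h₁
      rw [show n - (k + 1) = j by omega] at h₂
      rw [show n + 1 - (k + 1) = j + 1 by omega, qbinom_succ_succ, qbinom_succ_succ]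
      linear_combination h₁ + ζ ^ (k + 2) * h₂

def habiroSummand (n k : ℕ) (ζ : ℂ) : ℂ := ζ ^ (k ^ 2) * qbinom (n + k) (2 * k - 1) ζ

lemma aCoef_eq_sum_habiroSummand (n : ℕ) (ζ : ℂ) :
    aCoef n ζ = (-1) ^ n * ζ ^ (((n * (n + 3) / 2 : ℕ) : ℤ) - 1) *
      ∑ k ∈ Finset.Icc 1 (n + 1), habiroSummand n k ζ := rfl

namespace Nat

variable {n p : ℕ}

lemma add_one_div_mod_of_mod_add_one_lt (h : n % p + 1 < p) :
    (n + 1) / p = n / p ∧ (n + 1) % p = n % p + 1 :=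
  (Nat.div_mod_unique (by omega)).mpr ⟨by linarith [Nat.mod_add_div n p], h⟩

lemma add_one_div_mod_of_mod_add_one_eq (h : n % p + 1 = p) :
    (n + 1) / p = n / p + 1 ∧ (n + 1) % p = 0 :=
  (Nat.div_mod_unique (by omega)).mpr ⟨by linarith [Nat.mod_add_div n p], by omega⟩

end Nat

theorem Finset.sum_Icc_one_mul {M : Type*} [AddCommMonoid M] (f : ℕ → M) (m p : ℕ) :
    ∑ k ∈ Icc 1 (m * p), f k = ∑ l ∈ range m, ∑ r ∈ Icc 1 p, f (l * p + r) := by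
  have hIoc (n : ℕ) : Icc 1 n = Ioc 0 n := Icc_add_one_left_eq_Ioc 0 n
  induction m with
  | zero => simp
  | succ m ih =>
    have hshift : Ioc (m * p) (m * p + p) = (Ioc 0 p).map (addLeftEmbedding (m * p)) := by
      rw [map_add_left_Ioc, add_zero]
    rw [sum_range_succ, ← ih, add_mul, one_mul, hIoc, hIoc, hIoc,
      ← sum_Ioc_consecutive f (Nat.zero_le _) (Nat.le_add_right _ p), hshift, sum_map]
    rfl

lemma Odd.dvd_mul_add_three_div_two {p n : ℕ} (hodd : Odd p) (h : p ∣ n) :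
    p ∣ n * (n + 3) / 2 := by
  have heven : 2 ∣ n * (n + 3) := by
    rw [show n * (n + 3) = n * (n + 1) + 2 * n by ring]
    exact dvd_add (Nat.even_mul_succ_self n).two_dvd (dvd_mul_right 2 n)
  refine hodd.coprime_two_right.dvd_of_dvd_mul_left ?_
  rw [Nat.mul_div_cancel' heven]
  exact h.mul_right _

lemma zpow_natCast_sub_one_of_pow_eq_one {G : Type*} [GroupWithZero G] {x : G} {n : ℕ}
    (h : x ^ n = 1) : x ^ ((n : ℤ) - 1) = x⁻¹ := by
  rcases eq_or_ne n 0 with rfl | hn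
  · simp
  have hx : x ≠ 0 := by
    rintro rfl
    exact zero_ne_one ((zero_pow hn).symm.trans h)
  rw [zpow_sub_one₀ hx, zpow_natCast, h, one_mul]

namespace IsPrimitiveRoot

variable {p : ℕ} {ζ : ℂ}

lemma qbinom_eq_zero (hζ : IsPrimitiveRoot ζ p) {d : ℕ} (hd₀ : 0 < d) (hdp : d < p) :
    qbinom p d ζ = 0 := by
  induction d with
  | zero => omega
  | succ d ih =>
    have hne : (1 : ℂ) - ζ ^ (d + 1) ≠ 0 :=
      sub_ne_zero.mpr (hζ.pow_ne_one_of_pos_of_lt d.succ_ne_zero hdp).symm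
    have hstep := one_sub_pow_mul_qbinom p d ζ
    rcases Nat.eq_zero_or_pos d with rfl | hd
    · rw [Nat.sub_zero, hζ.pow_eq_one, sub_self, zero_mul] at hstep
      exact (mul_eq_zero.mp hstep.symm).resolve_left hne
    · rw [ih hd (by omega), mul_zero] at hstep
      exact (mul_eq_zero.mp hstep.symm).resolve_left hne

/-- The `q`-Lucas theorem. -/
theorem qbinom_eq_choose_mul_qbinom_mod (hζ : IsPrimitiveRoot ζ p) (n k : ℕ) :
    qbinom n k ζ = ((n / p).choose (k / p) : ℂ) * qbinom (n % p) (k % p) ζ := by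
  rcases Nat.eq_zero_or_pos p with rfl | hp
  · simp
  induction n generalizing k with
  | zero =>
    rcases Nat.eq_zero_or_pos (k / p) with hk | hk
    · rw [Nat.mod_eq_of_lt ((Nat.div_eq_zero_iff_lt hp).mp hk), hk]
      simp
    · simp [Nat.choose_eq_zero_of_lt hk, qbinom_eq_zero_of_lt (Nat.pos_of_div_pos hk)]
  | succ n ih =>
    cases k with
    | zero => simp
    | succ k =>
      rw [qbinom_succ_succ, ih, ih, ← pow_mod_orderOf, ← hζ.eq_orderOf]
      have hnp := Nat.mod_lt n hp
      have hkp := Nat.mod_lt k hp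
      obtain hn | hn : n % p + 1 < p ∨ n % p + 1 = p := by omega
      all_goals obtain hk | hk : k % p + 1 < p ∨ k % p + 1 = p := by omega
      · obtain ⟨hn₁, hn₂⟩ := Nat.add_one_div_mod_of_mod_add_one_lt hn
        obtain ⟨hk₁, hk₂⟩ := Nat.add_one_div_mod_of_mod_add_one_lt hk
        rw [hn₁, hn₂, hk₁, hk₂, qbinom_succ_succ]
        ring
      · obtain ⟨hn₁, hn₂⟩ := Nat.add_one_div_mod_of_mod_add_one_lt hn
        obtain ⟨hk₁, hk₂⟩ := Nat.add_one_div_mod_of_mod_add_one_eq hk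
        rw [hn₁, hn₂, hk₁, hk₂, qbinom_eq_zero_of_lt (by omega)]
        simp
      · obtain ⟨hn₁, hn₂⟩ := Nat.add_one_div_mod_of_mod_add_one_eq hn
        obtain ⟨hk₁, hk₂⟩ := Nat.add_one_div_mod_of_mod_add_one_lt hk
        rw [hn₁, hn₂, hk₁, hk₂, qbinom_eq_zero_of_lt (k % p).succ_pos, mul_zero, mul_left_comm,
          ← mul_add, ← qbinom_succ_succ, hn, hζ.qbinom_eq_zero (by omega) hk, mul_zero]
      · obtain ⟨hn₁, hn₂⟩ := Nat.add_one_div_mod_of_mod_add_one_eq hn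
        obtain ⟨hk₁, hk₂⟩ := Nat.add_one_div_mod_of_mod_add_one_eq hk
        rw [hn₁, hn₂, hk₁, hk₂, show n % p = k % p by omega, Nat.choose_succ_succ']
        simp

theorem qbinom_mul_add_mul_add (hζ : IsPrimitiveRoot ζ p) (a c : ℕ) {b d : ℕ} (hb : b < p)
    (hd : d < p) : qbinom (a * p + b) (c * p + d) ζ = (a.choose c : ℂ) * qbinom b d ζ := by
  have hp : 0 < p := by omega
  rw [hζ.qbinom_eq_choose_mul_qbinom_mod]
  simp [Nat.add_mul_div_right, Nat.div_eq_of_lt, Nat.mod_eq_of_lt, hb, hd, hp, add_comm _ b,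
    add_comm _ d]

lemma habiroSummand_mul_add (hζ : IsPrimitiveRoot ζ p) (m l r : ℕ) :
    habiroSummand (m * p) (l * p + r) ζ
      = ζ ^ (r ^ 2) * qbinom ((m + l) * p + r) (2 * (l * p + r) - 1) ζ := by
  rw [habiroSummand, show (l * p + r) ^ 2 = r ^ 2 + p * (l * (l * p + 2 * r)) by ring, pow_add,
    pow_mul, hζ.pow_eq_one, one_pow, mul_one, add_mul, add_assoc]

lemma habiroSummand_mul_add_one (hζ : IsPrimitiveRoot ζ p) (hp : 1 < p) (m l : ℕ) :
    habiroSummand (m * p) (l * p + 1) ζ = ζ * ((m + l).choose (2 * l) : ℂ) := by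
  rw [hζ.habiroSummand_mul_add, show 2 * (l * p + 1) - 1 = 2 * l * p + 1 by ring_nf; omega,
    hζ.qbinom_mul_add_mul_add _ _ hp hp, qbinom_self]
  ring

lemma habiroSummand_mul_add_of_lt (hζ : IsPrimitiveRoot ζ p) (m l : ℕ) {r : ℕ} (hr : 1 < r)
    (hrp : 2 * r - 1 < p) : habiroSummand (m * p) (l * p + r) ζ = 0 := by
  rw [hζ.habiroSummand_mul_add,
    show 2 * (l * p + r) - 1 = 2 * l * p + (2 * r - 1) by ring_nf; omega,
    hζ.qbinom_mul_add_mul_add _ _ (by omega) hrp, qbinom_eq_zero_of_lt (by omega), mul_zero,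
    mul_zero]

lemma habiroSummand_mul_add_of_le (hζ : IsPrimitiveRoot ζ p) (m l : ℕ) {r : ℕ} (hrp : r < p)
    (hpr : p ≤ 2 * r - 1) : habiroSummand (m * p) (l * p + r) ζ
      = ((m + l).choose (2 * l + 1) : ℂ) * (ζ ^ (r ^ 2) * qbinom r (2 * r - 1 - p) ζ) := by
  rw [hζ.habiroSummand_mul_add,
    show 2 * (l * p + r) - 1 = (2 * l + 1) * p + (2 * r - 1 - p) by ring_nf; omega,
    hζ.qbinom_mul_add_mul_add _ _ hrp (by omega)]
  ring

lemma habiroSummand_mul_add_self (hζ : IsPrimitiveRoot ζ p) (hp : 1 < p) (m l : ℕ) :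
    habiroSummand (m * p) (l * p + p) ζ = 0 := by
  rw [hζ.habiroSummand_mul_add, show (m + l) * p + p = (m + l + 1) * p + 0 by ring,
    show 2 * (l * p + p) - 1 = (2 * l + 1) * p + (p - 1) by ring_nf; omega,
    hζ.qbinom_mul_add_mul_add _ _ (by omega) (by omega), qbinom_eq_zero_of_lt (by omega),
    mul_zero, mul_zero]

lemma sum_habiroSummand_row (hζ : IsPrimitiveRoot ζ p) (hp : 1 < p) (hodd : Odd p) (m l : ℕ) :
    ∑ r ∈ Finset.Icc 1 p, habiroSummand (m * p) (l * p + r) ζ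
      = ζ * ((m + l).choose (2 * l) : ℂ) + ((m + l).choose (2 * l + 1) : ℂ) *
          ∑ j ∈ Finset.Icc ((p + 1) / 2) (p - 1), ζ ^ (j ^ 2) * qbinom j (2 * j - 1 - p) ζ := by
  have hterm : ∀ r ∈ Finset.Icc 1 p, habiroSummand (m * p) (l * p + r) ζ
      = (if r = 1 then ζ * ((m + l).choose (2 * l) : ℂ) else 0)
        + ((m + l).choose (2 * l + 1) : ℂ) * (if r ∈ Finset.Icc ((p + 1) / 2) (p - 1)
            then ζ ^ (r ^ 2) * qbinom r (2 * r - 1 - p) ζ else 0) := by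
    obtain ⟨q, rfl⟩ := hodd
    intro r hr
    rw [Finset.mem_Icc] at hr
    by_cases hfirst : r = 1
    · subst hfirst
      rw [hζ.habiroSummand_mul_add_one hp, if_pos rfl, if_neg (by rw [Finset.mem_Icc]; omega)]
      ring
    by_cases hlast : r = 2 * q + 1
    · subst hlast
      rw [hζ.habiroSummand_mul_add_self hp, if_neg hfirst,
        if_neg (by rw [Finset.mem_Icc]; omega)]
      ring
    by_cases hsmall : 2 * r - 1 < 2 * q + 1
    · rw [hζ.habiroSummand_mul_add_of_lt m l (by omega) hsmall, if_neg hfirst,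
        if_neg (by rw [Finset.mem_Icc]; omega)]
      ring
    · rw [hζ.habiroSummand_mul_add_of_le m l (by omega) (by omega), if_neg hfirst,
        if_pos (by rw [Finset.mem_Icc]; omega)]
      ring
  rw [Finset.sum_congr rfl hterm, Finset.sum_add_distrib, ← Finset.mul_sum, Finset.sum_ite_eq',
    if_pos (Finset.mem_Icc.mpr ⟨le_rfl, hp.le⟩), Finset.sum_ite_mem,
    Finset.inter_eq_right.mpr (Finset.Icc_subset_Icc (by omega) (by omega))]

lemma sum_habiroSummand (hζ : IsPrimitiveRoot ζ p) (hp : 1 < p) (hodd : Odd p) (m : ℕ) :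
    ∑ k ∈ Finset.Icc 1 (m * p + 1), habiroSummand (m * p) k ζ
      = ζ * (1 + ∑ l ∈ Finset.range m, ((m + l).choose (2 * l) : ℂ)) +
        (∑ l ∈ Finset.range m, ((m + l).choose (2 * l + 1) : ℂ)) *
          ∑ j ∈ Finset.Icc ((p + 1) / 2) (p - 1), ζ ^ (j ^ 2) * qbinom j (2 * j - 1 - p) ζ := by
  rw [Finset.sum_Icc_succ_top (by omega), Finset.sum_Icc_one_mul,
    Finset.sum_congr rfl fun l _ ↦ hζ.sum_habiroSummand_row hp hodd m l,
    hζ.habiroSummand_mul_add_one hp, ← two_mul, Nat.choose_self, Finset.sum_add_distrib,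
    ← Finset.sum_mul, ← Finset.mul_sum]
  ring

end IsPrimitiveRoot

theorem stmt18_general (p : ℕ) (hp : 3 ≤ p) (hodd : Odd p) (e : ℂ) (he : IsPrimitiveRoot e p)
    (m : ℕ) :
    aCoef (m * p) e =
      (-1) ^ m * (1 + ∑ l ∈ Finset.range m, ((m + l).choose (2 * l) : ℂ) +
        e⁻¹ * (∑ l ∈ Finset.range m, ((m + l).choose (2 * l + 1) : ℂ)) *
          ∑ j ∈ Finset.Icc ((p + 1) / 2) (p - 1),
            e ^ (j ^ 2) * qbinom j (2 * j - 1 - p) e) := by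
  have he₀ : e ≠ 0 := he.ne_zero (by omega)
  have hsign : (-1 : ℂ) ^ (m * p) = (-1) ^ m := by rw [pow_mul', hodd.neg_one_pow]
  have hprefactor : e ^ (((m * p * (m * p + 3) / 2 : ℕ) : ℤ) - 1) = e⁻¹ := by
    obtain ⟨t, ht⟩ := hodd.dvd_mul_add_three_div_two (dvd_mul_left p m)
    refine zpow_natCast_sub_one_of_pow_eq_one ?_
    rw [ht, pow_mul, he.pow_eq_one, one_pow]
  rw [aCoef_eq_sum_habiroSummand, hsign, hprefactor, he.sum_habiroSummand (by omega) hodd]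
  field_simp

theorem stmt18 (p : ℕ) (hp : 3 ≤ p) (hodd : Odd p) (e : ℂ) (he : IsPrimitiveRoot e p)
    (m : ℕ) (hm : 1 ≤ m) :
    aCoef (m * p) e =
      (-1) ^ m * (1 + ∑ l ∈ Finset.range m, ((m + l).choose (2 * l) : ℂ) +
        e⁻¹ * (∑ l ∈ Finset.range m, ((m + l).choose (2 * l + 1) : ℂ)) *
          ∑ j ∈ Finset.Icc ((p + 1) / 2) (p - 1),
            e ^ (j ^ 2) * qbinom j (2 * j - 1 - p) e) :=
  stmt18_general p hp hodd e he m
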